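/- Let L > 0, R > 0, α > 0, and let H : [0,∞) → [0,1] be measurable and integrable with ‖H‖₁ = ∫_0^∞ H(x) dx. Define g(x) = ∫_0^L H(ρ_L(0,z)/R) H(ρ_L(x,z)/R) dz for x ∈ [0,L]. Then, with C_α = (e^α − 1)/α, the integral of e^{g(x)} − 1 over the set { x ∈ [0,L] : g(x) ≤ α } is at most 4 C_α R² ‖H‖₁². -/

import Mathlib

/-!
On `{g ≤ α}` convexity of `exp` gives `e^g - 1 ≤ C_α g`, so it suffices to bound `∫₀ᴸ g`.
By Fubini, `∫₀ᴸ g = ∫₀ᴸ H(ρ_L(0,z)/R) (∫₀ᴸ H(ρ_L(x,z)/R) dx) dz`, and every such row integral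
`∫₀ᴸ H(ρ_L(y,z)/R) dz` equals `2 ∫₀^{L/2} H(u/R) du ≤ 2 R ‖H‖₁`: cutting the circle at `y` and
unfolding it, `ρ_L(y, ·)` runs through `[0, L/2]` exactly twice.
-/

open MeasureTheory Real

/-- Toroidal (circular) distance on `[0, L]`. -/
noncomputable def torDist (L x y : ℝ) : ℝ := min |x - y| (L - |x - y|)

open Set

section Fold

open intervalIntegral

variable {L : ℝ} {F : ℝ → ℝ}

theorem intervalIntegrable_comp_min_sub (hL : 0 ≤ L)
    (hF : IntervalIntegrable F volume 0 (L / 2)) :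
    IntervalIntegrable (fun u => F (min u (L - u))) volume 0 L := by
  have hleft : IntervalIntegrable (fun u => F (min u (L - u))) volume 0 (L / 2) := by
    refine hF.congr fun u hu => ?_
    rw [uIoc_of_le (by linarith)] at hu
    simp only [min_eq_left (by linarith [hu.2] : u ≤ L - u)]
  have hright : IntervalIntegrable (fun u => F (min u (L - u))) volume (L / 2) L := by
    have := (hF.comp_sub_left L).symm
    rw [sub_zero, show L - L / 2 = L / 2 by ring] at this
    refine this.congr fun u hu => ?_
    rw [uIoc_of_le (by linarith)] at hu
    simp only [min_eq_right (by linarith [hu.1] : L - u ≤ u)]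
  exact hleft.trans hright

theorem integral_comp_min_sub (hL : 0 ≤ L) (hF : IntervalIntegrable F volume 0 (L / 2)) :
    ∫ u in 0..L, F (min u (L - u)) = 2 * ∫ u in 0..L / 2, F u := by
  have hG := intervalIntegrable_comp_min_sub hL hF
  have hleft : ∫ u in 0..L / 2, F (min u (L - u)) = ∫ u in 0..L / 2, F u := by
    refine integral_congr fun u hu => ?_
    rw [uIcc_of_le (by linarith)] at hu
    simp only [min_eq_left (by linarith [hu.2] : u ≤ L - u)]
  have hright : ∫ u in L / 2..L, F (min u (L - u)) = ∫ u in 0..L / 2, F u := by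
    calc ∫ u in L / 2..L, F (min u (L - u)) = ∫ u in L / 2..L, F (L - u) := by
          refine integral_congr fun u hu => ?_
          rw [uIcc_of_le (by linarith)] at hu
          simp only [min_eq_right (by linarith [hu.1] : L - u ≤ u)]
      _ = ∫ u in 0..L / 2, F u := by
          rw [integral_comp_sub_left, sub_self, show L - L / 2 = L / 2 by ring]
  have hmid : L / 2 ∈ uIcc 0 L := by
    rw [uIcc_of_le hL]
    constructor <;> linarith
  rw [← integral_add_adjacent_intervals (hG.mono_set (uIcc_subset_uIcc_left hmid))
    (hG.mono_set (uIcc_subset_uIcc_right hmid)), hleft, hright, two_mul]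

theorem integral_comp_torDist {y : ℝ} (hF : IntervalIntegrable F volume 0 (L / 2))
    (hy : y ∈ Icc 0 L) :
    ∫ z in 0..L, F (torDist L y z) = 2 * ∫ u in 0..L / 2, F u := by
  have hy' : y ∈ uIcc 0 L := Icc_subset_uIcc hy
  obtain ⟨hy0, hyL⟩ := hy
  have hL := hy0.trans hyL
  set G := fun u => F (min u (L - u)) with hG_def
  have hG := intervalIntegrable_comp_min_sub hL hF
  have hGsymm : ∀ u, G (L - u) = G u := fun u => by simp only [hG_def, sub_sub_cancel, min_comm]
  have hleft : EqOn (fun z => F (torDist L y z)) (fun z => G (y - z)) (uIcc 0 y) := by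
    intro z hz
    rw [uIcc_of_le hy0] at hz
    simp only [hG_def, torDist, abs_of_nonneg (sub_nonneg.2 hz.2)]
  have hright : EqOn (fun z => F (torDist L y z)) (fun z => G (z - y)) (uIcc y L) := by
    intro z hz
    rw [uIcc_of_le hyL] at hz
    simp only [hG_def, torDist, abs_sub_comm y z, abs_of_nonneg (sub_nonneg.2 hz.1)]
  have hint_left : IntervalIntegrable (fun z => F (torDist L y z)) volume 0 y := by
    refine ((hG.comp_sub_left y).mono_set ?_).congr
      fun z hz => (hleft (uIoc_subset_uIcc hz)).symm
    rw [uIcc_of_le hy0, uIcc_of_ge (by linarith)]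
    exact Icc_subset_Icc (by linarith) (by linarith)
  have hint_right : IntervalIntegrable (fun z => F (torDist L y z)) volume y L := by
    refine ((hG.comp_sub_right y).mono_set ?_).congr
      fun z hz => (hright (uIoc_subset_uIcc hz)).symm
    rw [uIcc_of_le hyL, uIcc_of_le (by linarith)]
    exact Icc_subset_Icc (by linarith) (by linarith)
  -- The piece right of `y` is `∫₀^{L-y} G`; the reflection `G (L - u) = G u` moves it to `[y, L]`.
  have hreflect : ∫ u in 0..L - y, G u = ∫ u in y..L, G u :=
    calc ∫ u in 0..L - y, G u = ∫ u in 0..L - y, G (L - u) := by simp only [hGsymm]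
      _ = ∫ u in y..L, G u := by rw [integral_comp_sub_left, sub_zero, sub_sub_cancel]
  rw [← integral_comp_min_sub hL hF,
    ← integral_add_adjacent_intervals hint_left hint_right, integral_congr hleft,
    integral_congr hright, integral_comp_sub_left, integral_comp_sub_right,
    sub_self, sub_zero, hreflect, integral_add_adjacent_intervals
    (hG.mono_set (uIcc_subset_uIcc_left hy')) (hG.mono_set (uIcc_subset_uIcc_right hy'))]

theorem integral_comp_torDist_div_le {H : ℝ → ℝ} {R y : ℝ} (hR : 0 < R)
    (hH : IntegrableOn H (Ioi 0)) (hH0 : ∀ x, 0 ≤ H x) (hy : y ∈ Icc 0 L) :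
    ∫ z in 0..L, H (torDist L y z / R) ≤ 2 * R * ∫ x in Ioi 0, H x := by
  have hF : IntegrableOn (fun u => H (u / R)) (Ioi 0) := by
    simp_rw [div_eq_mul_inv]
    exact (integrableOn_Ioi_comp_mul_right_iff H 0 (inv_pos.2 hR)).2 (by rwa [zero_mul])
  have hL2 : 0 ≤ L / 2 := by linarith [hy.1.trans hy.2]
  have hFL : IntervalIntegrable (fun u => H (u / R)) volume 0 (L / 2) :=
    (intervalIntegrable_iff_integrableOn_Ioc_of_le hL2).2 (hF.mono_set Ioc_subset_Ioi_self)
  calc ∫ z in 0..L, H (torDist L y z / R) = 2 * ∫ u in 0..L / 2, H (u / R) :=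
        integral_comp_torDist hFL hy
    _ ≤ 2 * ∫ u in Ioi 0, H (u / R) := by
        rw [integral_of_le hL2]
        gcongr 2 * ?_
        exact setIntegral_mono_set hF (Filter.Eventually.of_forall fun u => hH0 _)
          Ioc_subset_Ioi_self.eventuallyLE
    _ = 2 * R * ∫ x in Ioi 0, H x := by
        simp_rw [div_eq_mul_inv]
        rw [integral_comp_mul_right_Ioi _ _ (inv_pos.2 hR), zero_mul, inv_inv, smul_eq_mul,
          mul_assoc]

end Fold

theorem exp_sub_one_div_nonneg (α : ℝ) : 0 ≤ (exp α - 1) / α := by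
  rcases le_total 0 α with hα | hα
  · exact div_nonneg (by linarith [one_le_exp hα]) hα
  · exact div_nonneg_of_nonpos (by linarith [exp_le_one_iff.2 hα]) hα

theorem exp_sub_one_le_mul_of_le {t α : ℝ} (ht : 0 ≤ t) (htα : t ≤ α) :
    exp t - 1 ≤ (exp α - 1) / α * t := by
  rcases ht.eq_or_lt with rfl | ht
  · simp
  have hslope := convexOn_exp.secant_mono (a := 0) (mem_univ _) (mem_univ t) (mem_univ α)
    ht.ne' (ht.trans_le htα).ne' htα
  simp only [exp_zero, sub_zero] at hslope
  rw [div_le_iff₀ ht] at hslope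
  linarith

theorem setIntegral_exp_sub_one_le {X : Type*} [MeasurableSpace X] {μ : Measure X} {g : X → ℝ}
    {s : Set X} (α : ℝ) (hs : MeasurableSet s) (hgm : Measurable g) (hg : IntegrableOn g s μ)
    (hg0 : ∀ x ∈ s, 0 ≤ g x) :
    ∫ x in {x | x ∈ s ∧ g x ≤ α}, (exp (g x) - 1) ∂μ ≤ (exp α - 1) / α * ∫ x in s, g x ∂μ := by
  set T := {x | x ∈ s ∧ g x ≤ α}
  have hT : MeasurableSet T := hs.inter (hgm measurableSet_Iic)
  have hTs : T ⊆ s := fun x hx => hx.1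
  have hle : ∀ x ∈ T, exp (g x) - 1 ≤ (exp α - 1) / α * g x :=
    fun x hx => exp_sub_one_le_mul_of_le (hg0 x hx.1) hx.2
  have hgT : IntegrableOn (fun x => (exp α - 1) / α * g x) T μ := (hg.mono_set hTs).const_mul _
  have hexpT : IntegrableOn (fun x => exp (g x) - 1) T μ := by
    refine hgT.mono' (by fun_prop) (ae_restrict_of_forall_mem hT fun x hx => ?_)
    rw [Real.norm_of_nonneg (sub_nonneg.2 (one_le_exp (hg0 x hx.1)))]
    exact hle x hx
  calc ∫ x in T, (exp (g x) - 1) ∂μ ≤ ∫ x in T, (exp α - 1) / α * g x ∂μ :=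
        setIntegral_mono_on hexpT hgT hT hle
    _ ≤ ∫ x in s, (exp α - 1) / α * g x ∂μ :=
        setIntegral_mono_set (hg.const_mul _) (ae_restrict_of_forall_mem hs fun x hx =>
          mul_nonneg (exp_sub_one_div_nonneg α) (hg0 x hx)) hTs.eventuallyLE
    _ = (exp α - 1) / α * ∫ x in s, g x ∂μ := integral_const_mul _ _

theorem integral_integral_mul_le_integral_mul {X Y : Type*} [MeasurableSpace X]
    [MeasurableSpace Y] {μ : Measure X} {ν : Measure Y} [SFinite μ] [SFinite ν] {a : Y → ℝ}
    {b : X → Y → ℝ} {M : ℝ}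
    (hab : Integrable (fun p : X × Y => a p.2 * b p.1 p.2) (μ.prod ν)) (ha : Integrable a ν)
    (ha0 : ∀ z, 0 ≤ a z) (hb : ∀ᵐ z ∂ν, ∫ x, b x z ∂μ ≤ M) :
    ∫ x, ∫ z, a z * b x z ∂ν ∂μ ≤ (∫ z, a z ∂ν) * M := by
  rw [integral_integral_swap hab, ← MeasureTheory.integral_mul_const]
  simp_rw [integral_const_mul]
  refine integral_mono_ae ?_ (ha.mul_const M)
    (hb.mono fun z hz => mul_le_mul_of_nonneg_left hz (ha0 z))
  simpa only [integral_const_mul] using hab.integral_prod_right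

theorem torDist_comm (L x y : ℝ) : torDist L x y = torDist L y x := by
  simp only [torDist, abs_sub_comm x y]

noncomputable def torusOverlap (L R : ℝ) (H : ℝ → ℝ) (x : ℝ) : ℝ :=
  ∫ z in Ioc 0 L, H (torDist L 0 z / R) * H (torDist L x z / R)

section Overlap

variable {L R : ℝ} {H : ℝ → ℝ}

theorem measurable_torusKernel (hH : Measurable H) :
    Measurable fun p : ℝ × ℝ => H (torDist L 0 p.2 / R) * H (torDist L p.1 p.2 / R) := by
  unfold torDist
  fun_prop

theorem integrable_torusKernel (hH : Measurable H) (hH0 : ∀ x, 0 ≤ H x) (hH1 : ∀ x, H x ≤ 1) :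
    Integrable (fun p : ℝ × ℝ => H (torDist L 0 p.2 / R) * H (torDist L p.1 p.2 / R))
      ((volume.restrict (Ioc 0 L)).prod (volume.restrict (Ioc 0 L))) :=
  Integrable.of_bound (measurable_torusKernel hH).aestronglyMeasurable 1
    (Filter.Eventually.of_forall fun _ => by
      rw [Real.norm_of_nonneg (mul_nonneg (hH0 _) (hH0 _))]
      exact mul_le_one₀ (hH1 _) (hH0 _) (hH1 _))

theorem measurable_torusOverlap (hH : Measurable H) : Measurable (torusOverlap L R H) :=
  (measurable_torusKernel hH).stronglyMeasurable.integral_prod_right'.measurable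

theorem torusOverlap_nonneg (hH0 : ∀ x, 0 ≤ H x) (x : ℝ) : 0 ≤ torusOverlap L R H x :=
  setIntegral_nonneg measurableSet_Ioc fun _ _ => mul_nonneg (hH0 _) (hH0 _)

theorem integrableOn_torusOverlap (hH : Measurable H) (hH0 : ∀ x, 0 ≤ H x)
    (hH1 : ∀ x, H x ≤ 1) : IntegrableOn (torusOverlap L R H) (Icc 0 L) :=
  (integrableOn_Icc_iff_integrableOn_Ioc enorm_ne_top).2
    (integrable_torusKernel hH hH0 hH1).integral_prod_left

theorem setIntegral_torusOverlap_le (hL : 0 ≤ L) (hR : 0 < R) (hH : Measurable H)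
    (hH0 : ∀ x, 0 ≤ H x) (hH1 : ∀ x, H x ≤ 1) (hHi : IntegrableOn H (Ioi 0)) :
    ∫ x in Ioc 0 L, torusOverlap L R H x ≤ (2 * R * ∫ x in Ioi 0, H x) ^ 2 := by
  set M := 2 * R * ∫ x in Ioi 0, H x
  have hrow : ∀ y ∈ Icc 0 L, ∫ z in Ioc 0 L, H (torDist L y z / R) ≤ M := fun y hy => by
    rw [← intervalIntegral.integral_of_le hL]
    exact integral_comp_torDist_div_le hR hHi hH0 hy
  have hrow0 := hrow 0 ⟨le_rfl, hL⟩
  have hM : 0 ≤ M := (setIntegral_nonneg measurableSet_Ioc fun _ _ => hH0 _).trans hrow0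
  have hcol : ∀ᵐ z ∂volume.restrict (Ioc 0 L), ∫ x in Ioc 0 L, H (torDist L x z / R) ≤ M :=
    ae_restrict_of_forall_mem measurableSet_Ioc fun z hz => by
      simp_rw [torDist_comm L _ z]
      exact hrow z (Ioc_subset_Icc_self hz)
  have ha : IntegrableOn (fun z => H (torDist L 0 z / R)) (Ioc 0 L) :=
    Measure.integrableOn_of_bounded measure_Ioc_lt_top.ne
      (by unfold torDist; fun_prop : Measurable fun z => H (torDist L 0 z / R)).aestronglyMeasurable
      (Filter.Eventually.of_forall fun _ => by
        rw [Real.norm_of_nonneg (hH0 _)]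
        exact hH1 _)
  calc ∫ x in Ioc 0 L, torusOverlap L R H x
      ≤ (∫ z in Ioc 0 L, H (torDist L 0 z / R)) * M :=
        integral_integral_mul_le_integral_mul (integrable_torusKernel hH hH0 hH1) ha
          (fun _ => hH0 _) hcol
    _ ≤ M * M := mul_le_mul_of_nonneg_right hrow0 hM
    _ = M ^ 2 := (sq M).symm

end Overlap

theorem stmt_4_general (L R α : ℝ) (hL : 0 < L) (hR : 0 < R) (H : ℝ → ℝ)
    (hmeas : Measurable H) (h0 : ∀ x, 0 ≤ H x) (h1 : ∀ x, H x ≤ 1)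
    (hint : IntegrableOn H (Set.Ioi 0))
    (g : ℝ → ℝ)
    (hg : ∀ x, g x = ∫ z in (0:ℝ)..L, H (torDist L 0 z / R) * H (torDist L x z / R)) :
    ∫ x in {x : ℝ | x ∈ Set.Icc (0:ℝ) L ∧ g x ≤ α}, (Real.exp (g x) - 1)
      ≤ 4 * ((Real.exp α - 1) / α) * R ^ 2 * (∫ x in Set.Ioi (0:ℝ), H x) ^ 2 := by
  obtain rfl : g = torusOverlap L R H :=
    funext fun x => by rw [hg, intervalIntegral.integral_of_le hL.le, torusOverlap]
  calc _ ≤ (exp α - 1) / α * ∫ x in Icc 0 L, torusOverlap L R H x :=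
        setIntegral_exp_sub_one_le α measurableSet_Icc (measurable_torusOverlap hmeas)
          (integrableOn_torusOverlap hmeas h0 h1) fun x _ => torusOverlap_nonneg h0 x
    _ ≤ (exp α - 1) / α * (2 * R * ∫ x in Ioi 0, H x) ^ 2 := by
        rw [integral_Icc_eq_integral_Ioc]
        exact mul_le_mul_of_nonneg_left (setIntegral_torusOverlap_le hL.le hR hmeas h0 h1 hint)
          (exp_sub_one_div_nonneg α)
    _ = 4 * ((exp α - 1) / α) * R ^ 2 * (∫ x in Ioi 0, H x) ^ 2 := by ring

/-- With `C_α = (e^α − 1)/α`, the integral of `e^{g(x)} − 1` over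
`{ x ∈ [0,L] : g(x) ≤ α }` is at most `4 C_α R² ‖H‖₁²`,
where `g(x) = ∫_0^L H(ρ_L(0,z)/R) H(ρ_L(x,z)/R) dz`. -/
theorem stmt_4 (L R α : ℝ) (hL : 0 < L) (hR : 0 < R) (hα : 0 < α) (H : ℝ → ℝ)
    (hmeas : Measurable H) (h0 : ∀ x, 0 ≤ H x) (h1 : ∀ x, H x ≤ 1)
    (hint : IntegrableOn H (Set.Ioi 0))
    (g : ℝ → ℝ)
    (hg : ∀ x, g x = ∫ z in (0:ℝ)..L, H (torDist L 0 z / R) * H (torDist L x z / R)) :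
    ∫ x in {x : ℝ | x ∈ Set.Icc (0:ℝ) L ∧ g x ≤ α}, (Real.exp (g x) - 1)
      ≤ 4 * ((Real.exp α - 1) / α) * R ^ 2 * (∫ x in Set.Ioi (0:ℝ), H x) ^ 2 :=
  stmt_4_general L R α hL hR H hmeas h0 h1 hint g hg
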